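/- arXiv:2309.16848 — 4 statements merged into one kernel-verified Lean document; each statement's English description precedes it below -/
import Mathlib

section
/- The transformations W and E are mutually inverse: for any vector (c_0,...,c_d) of real numbers, applying W (defined by (c_0,...,c_d) ↦ coefficients of Σ_{i=0}^d c_i A_i(x)(1-x)^{d-i}, where A_i is the i-th Eulerian polynomial) followed by E (defined by (h_0,...,h_d) ↦ coefficients of Σ_{i=0}^d h_i·binom(x+d-i, d)) returns the original vector. -/
/-- The `i`-th Eulerian polynomial (convention `A_0 = 1`, `A_1 = x`, `A_2 = x + x^2`, ...),
defined via the recurrence `A_{n+1}(x) = (n+1) x A_n(x) + x (1-x) A_n'(x)`. -/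
noncomputable def eulerian : ℕ → Polynomial ℝ
  | 0 => 1
  | n + 1 =>
      Polynomial.C ((n : ℝ) + 1) * Polynomial.X * eulerian n +
        Polynomial.X * (1 - Polynomial.X) * Polynomial.derivative (eulerian n)

/-- The polynomial `binom(x + d - i, d) = (x+d-i)(x+d-i-1)⋯(x+d-i-d+1)/d!` in `x`. -/
noncomputable def binomBasis (d i : ℕ) : Polynomial ℝ :=
  Polynomial.C ((d.factorial : ℝ))⁻¹ *
    ∏ j ∈ Finset.range d,
      (Polynomial.X + Polynomial.C ((d : ℝ) - (i : ℝ) - (j : ℝ)))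

/-- The operator `W` sending `(c_0, …, c_d)` to the coefficient vector of
`∑ c_i A_i(x) (1-x)^{d-i}`. -/
noncomputable def Wpoly (d : ℕ) (c : ℕ → ℝ) : Polynomial ℝ :=
  ∑ i ∈ Finset.range (d + 1),
    Polynomial.C (c i) * eulerian i * (1 - Polynomial.X) ^ (d - i)

/-- The operator `E` sending `(h_0, …, h_d)` to the coefficient vector of
`∑ h_i binom(x + d - i, d)`. -/
noncomputable def Epoly (d : ℕ) (h : ℕ → ℝ) : Polynomial ℝ :=
  ∑ i ∈ Finset.range (d + 1), Polynomial.C (h i) * binomBasis d i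

/-! ### Auxiliary power series machinery -/

open PowerSeries

/-- The power series `∑_m m^i x^m`. -/
noncomputable def Spow (i : ℕ) : PowerSeries ℝ := PowerSeries.mk fun m => (m : ℝ) ^ i

lemma SL (i : ℕ) : Spow (i+1) = X * (d⁄dX ℝ) (Spow i) := by
  ext n
  cases n with
  | zero => simp [Spow, coeff_zero_X_mul]
  | succ n =>
      rw [coeff_succ_X_mul, coeff_derivative]
      simp [Spow, coeff_mk]
      ring

lemma L1 (i : ℕ) : (1 - X) ^ (i+1) * Spow i = (eulerian i : PowerSeries ℝ) := by
  induction i with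
  | zero =>
      have : ((eulerian 0 : Polynomial ℝ) : PowerSeries ℝ) = 1 := by simp [eulerian]
      rw [this, pow_one, sub_mul, one_mul]
      ext n
      cases n with
      | zero => simp [Spow]
      | succ n => simp [Spow, coeff_succ_X_mul, coeff_mk]
  | succ i IH =>
      have hone : (d⁄dX ℝ) (1 - X : PowerSeries ℝ) = -1 := by
        rw [Derivation.map_sub]; simp
      have hpow : (d⁄dX ℝ) ((1 - X : PowerSeries ℝ) ^ (i+1)) =
          - (((i:ℕ)+1 : ℕ) : PowerSeries ℝ) * (1 - X) ^ i := by
        rw [Derivation.leibniz_pow, hone]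
        simp [smul_eq_mul, Nat.succ_sub_one]
        ring
      have hD := congrArg (d⁄dX ℝ) IH
      rw [Derivation.leibniz, smul_eq_mul, smul_eq_mul, hpow, derivative_coe] at hD
      have heu : ((eulerian (i+1) : Polynomial ℝ) : PowerSeries ℝ) =
          PowerSeries.C ((i:ℝ)+1) * X * (eulerian i : PowerSeries ℝ) +
            X * (1 - X) * ((Polynomial.derivative (eulerian i) : Polynomial ℝ) : PowerSeries ℝ) := by
        rw [show eulerian (i+1) = Polynomial.C ((i:ℝ)+1) * Polynomial.X * eulerian i +
          Polynomial.X * (1 - Polynomial.X) * Polynomial.derivative (eulerian i) from rfl]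
        push_cast [Polynomial.coe_add, Polynomial.coe_mul, Polynomial.coe_sub, Polynomial.coe_C,
          Polynomial.coe_X, Polynomial.coe_one]
        ring
      rw [heu, ← IH, ← hD, SL]
      have hc : (PowerSeries.C ((i:ℝ)+1)) = (((i:ℕ)+1 : ℕ) : PowerSeries ℝ) := by
        simp [map_add, map_one, map_natCast]
      rw [hc]
      ring

lemma eval_binomBasis (d j : ℕ) (y : ℝ) :
    (binomBasis d j).eval y
      = ((d.factorial : ℝ))⁻¹ * ∏ k ∈ Finset.range d, (y + ((d : ℝ) - j - k)) := by
  simp [binomBasis, Polynomial.eval_prod]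

lemma prodDiff (d : ℕ) (z : ℝ) :
    (∏ k ∈ Finset.range (d+1), (z - k)) - (∏ k ∈ Finset.range (d+1), (z - 1 - k))
      = ((d : ℝ) + 1) * ∏ k ∈ Finset.range d, (z - 1 - k) := by
  rw [Finset.prod_range_succ' (fun k => z - (k : ℝ)), Finset.prod_range_succ]
  have h : ∀ k ∈ Finset.range d, z - (((k : ℕ) + 1 : ℕ) : ℝ) = z - 1 - k := by
    intro k _; push_cast; ring
  rw [Finset.prod_congr rfl h]
  push_cast
  ring

lemma RI (d j : ℕ) (y : ℝ) :
    (binomBasis (d+1) j).eval y - (binomBasis (d+1) j).eval (y-1)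
      = (binomBasis d j).eval y := by
  rw [eval_binomBasis, eval_binomBasis, eval_binomBasis]
  set z : ℝ := y + ((d : ℝ) + 1) - j with hz
  have h1 : ∀ k ∈ Finset.range (d+1), y + (((d+1 : ℕ) : ℝ) - j - k) = z - k := by
    intro k _; push_cast [hz]; ring
  have h2 : ∀ k ∈ Finset.range (d+1), (y-1) + (((d+1 : ℕ) : ℝ) - j - k) = z - 1 - k := by
    intro k _; push_cast [hz]; ring
  have h3 : ∀ k ∈ Finset.range d, y + ((d : ℝ) - j - k) = z - 1 - k := by
    intro k _; push_cast [hz]; ring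
  rw [Finset.prod_congr rfl h1, Finset.prod_congr rfl h2, Finset.prod_congr rfl h3,
    ← mul_sub, prodDiff]
  have hfac : ((d+1).factorial : ℝ) = ((d : ℝ) + 1) * (d.factorial : ℝ) := by
    rw [Nat.factorial_succ]; push_cast; ring
  rw [hfac, mul_inv]
  have h0 : ((d : ℝ) + 1) ≠ 0 := by positivity
  field_simp

/-- The power series `∑_m binom(m+d-j, d) x^m`. -/
noncomputable def Bpow (d j : ℕ) : PowerSeries ℝ :=
  PowerSeries.mk fun m => (binomBasis d j).eval (m : ℝ)

lemma Kstep (d j : ℕ) (hj : j ≤ d) : (1 - X) * Bpow (d+1) j = Bpow d j := by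
  have hneg : (binomBasis (d+1) j).eval (-1) = 0 := by
    rw [eval_binomBasis]
    rw [Finset.prod_eq_zero (Finset.mem_range.2 (show d - j < d + 1 by omega))]
    · ring
    · push_cast [Nat.cast_sub hj]; ring
  rw [sub_mul, one_mul]
  ext n
  cases n with
  | zero =>
      simp only [map_sub, coeff_zero_X_mul, sub_zero, Bpow, coeff_mk]
      have := RI d j 0
      rw [show (0:ℝ) - 1 = -1 by ring, hneg, sub_zero] at this
      simpa using this
  | succ n =>
      simp only [map_sub, coeff_succ_X_mul, Bpow, coeff_mk]
      have := RI d j ((n:ℝ)+1)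
      rw [show ((n:ℝ)+1) - 1 = (n:ℝ) by ring] at this
      push_cast
      convert this using 2

lemma Shift (d j : ℕ) (hj : j < d) : X * Bpow d j = Bpow d (j+1) := by
  ext n
  cases n with
  | zero =>
      simp only [coeff_zero_X_mul, Bpow, coeff_mk]
      rw [eval_binomBasis]
      rw [Finset.prod_eq_zero (Finset.mem_range.2 (show d - (j+1) < d by omega))]
      · ring
      · push_cast [Nat.cast_sub (show j+1 ≤ d by omega)]; ring
  | succ n =>
      simp only [coeff_succ_X_mul, Bpow, coeff_mk]
      rw [eval_binomBasis, eval_binomBasis]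
      congr 1
      apply Finset.prod_congr rfl
      intro k _
      push_cast
      ring

lemma L2 (d : ℕ) : ∀ j ≤ d, (1 - X) ^ (d+1) * Bpow d j = (X : PowerSeries ℝ) ^ j := by
  induction d with
  | zero =>
      intro j hj
      interval_cases j
      rw [pow_one, pow_zero, sub_mul, one_mul]
      ext n
      cases n with
      | zero => simp [Bpow, binomBasis]
      | succ n => simp [Bpow, coeff_succ_X_mul, binomBasis]
  | succ d IH =>
      have main : ∀ j ≤ d, (1 - X) ^ (d+2) * Bpow (d+1) j = (X : PowerSeries ℝ) ^ j := by
        intro j hj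
        calc (1 - X) ^ (d+2) * Bpow (d+1) j
            = (1 - X) ^ (d+1) * ((1 - X) * Bpow (d+1) j) := by ring
          _ = (1 - X) ^ (d+1) * Bpow d j := by rw [Kstep d j hj]
          _ = X ^ j := IH j hj
      intro j hj
      rcases Nat.lt_or_ge j (d+1) with h | h
      · exact main j (by omega)
      · have hjd : j = d + 1 := by omega
        subst hjd
        rw [← Shift (d+1) d (by omega), show d+1+1 = d+2 from rfl]
        calc (1 - X) ^ (d+2) * (X * Bpow (d+1) d)
            = X * ((1 - X) ^ (d+2) * Bpow (d+1) d) := by ring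
          _ = X * X ^ d := by rw [main d le_rfl]
          _ = X ^ (d+1) := by ring

/-! ### Degree bounds -/

lemma eulerian_natDegree (n : ℕ) : (eulerian n).natDegree ≤ n := by
  induction n with
  | zero => simp [eulerian]
  | succ n IH =>
      rw [show eulerian (n+1) = Polynomial.C ((n:ℝ)+1) * Polynomial.X * eulerian n +
        Polynomial.X * (1 - Polynomial.X) * Polynomial.derivative (eulerian n) from rfl]
      refine le_trans (Polynomial.natDegree_add_le _ _) (max_le ?_ ?_)
      · refine le_trans (Polynomial.natDegree_mul_le) ?_
        have h1 : (Polynomial.C ((n:ℝ)+1) * Polynomial.X).natDegree ≤ 1 :=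
          le_trans (Polynomial.natDegree_C_mul_le _ _) (by simp)
        omega
      · by_cases hd : Polynomial.derivative (eulerian n) = 0
        · simp [hd]
        · have hnd : 1 ≤ (eulerian n).natDegree := by
            by_contra hlt
            have h0 : (eulerian n).natDegree = 0 := by omega
            obtain ⟨a, ha⟩ := Polynomial.natDegree_eq_zero.mp h0
            rw [← ha] at hd
            simp at hd
          have h2 : (Polynomial.derivative (eulerian n)).natDegree ≤ n - 1 :=
            le_trans (Polynomial.natDegree_derivative_le _) (by omega)
          refine le_trans (Polynomial.natDegree_mul_le) ?_
          have h3 : (Polynomial.X * (1 - Polynomial.X) : Polynomial ℝ).natDegree ≤ 2 := by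
            refine le_trans Polynomial.natDegree_mul_le ?_
            have : (1 - Polynomial.X : Polynomial ℝ).natDegree ≤ 1 :=
              le_trans (Polynomial.natDegree_sub_le _ _) (by simp)
            simp only [Polynomial.natDegree_X]
            omega
          omega

lemma Wpoly_coeff_eq_zero (d : ℕ) (c : ℕ → ℝ) {m : ℕ} (hm : d < m) :
    (Wpoly d c).coeff m = 0 := by
  rw [Wpoly, Polynomial.finset_sum_coeff]
  refine Finset.sum_eq_zero fun i hi => ?_
  have hi' : i ≤ d := by simpa [Nat.lt_succ_iff] using hi
  apply Polynomial.coeff_eq_zero_of_natDegree_lt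
  refine lt_of_le_of_lt ?_ hm
  refine le_trans Polynomial.natDegree_mul_le ?_
  have h1 : (Polynomial.C (c i) * eulerian i).natDegree ≤ i :=
    le_trans Polynomial.natDegree_mul_le (by simpa using eulerian_natDegree i)
  have h2 : ((1 - Polynomial.X : Polynomial ℝ) ^ (d - i)).natDegree ≤ d - i := by
    refine le_trans (Polynomial.natDegree_pow_le) ?_
    have : (1 - Polynomial.X : Polynomial ℝ).natDegree ≤ 1 :=
      le_trans (Polynomial.natDegree_sub_le _ _) (by simp)
    calc (d-i) * (1 - Polynomial.X : Polynomial ℝ).natDegree ≤ (d-i) * 1 :=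
          Nat.mul_le_mul_left _ this
      _ = d - i := by omega
  omega

/-! ### The evaluation embedding -/

/-- The power series of values of a polynomial at natural numbers. -/
noncomputable def Psi (p : Polynomial ℝ) : PowerSeries ℝ :=
  PowerSeries.mk fun m => p.eval (m : ℝ)

lemma Psi_injective : Function.Injective Psi := by
  intro p q hpq
  apply Polynomial.eq_of_infinite_eval_eq
  have hsub : Set.range ((↑) : ℕ → ℝ) ⊆ { x | p.eval x = q.eval x } := by
    rintro _ ⟨m, rfl⟩
    have := congrArg (PowerSeries.coeff m) hpq
    simpa [Psi, coeff_mk] using this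
  exact Set.Infinite.mono hsub
    (Set.infinite_range_of_injective Nat.cast_injective)

lemma onenegX_pow_ne_zero (k : ℕ) : ((1 - X : PowerSeries ℝ)) ^ k ≠ 0 := by
  apply pow_ne_zero
  intro h
  have := congrArg (PowerSeries.constantCoeff) h
  simp at this

/-! ### Main theorem -/

/-- `E` and `W` are mutually inverse: applying `W` to a vector `(c_0, …, c_d)` and then
`E` to the resulting coefficient vector returns the original vector. -/
theorem E_comp_W_eq_id (d : ℕ) (c : ℕ → ℝ) :
    ∀ j ≤ d, (Epoly d (fun i => (Wpoly d c).coeff i)).coeff j = c j := by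
  set p := Wpoly d c with hp
  set f : Polynomial ℝ := ∑ i ∈ Finset.range (d+1), Polynomial.C (c i) * Polynomial.X ^ i
    with hf
  -- Step 1: (1-X)^{d+1} * Psi (Epoly d p.coeff) = ↑p
  have hE : Psi (Epoly d fun i => p.coeff i)
      = ∑ j ∈ Finset.range (d+1), PowerSeries.C (p.coeff j) * Bpow d j := by
    ext m
    simp [Psi, Epoly, Bpow, coeff_mk, map_sum, coeff_C_mul, Polynomial.eval_finset_sum]
  have key1 : (1 - X) ^ (d+1) * Psi (Epoly d fun i => p.coeff i) = (p : PowerSeries ℝ) := by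
    rw [hE, Finset.mul_sum]
    have hterm : ∀ j ∈ Finset.range (d+1),
        (1 - X) ^ (d+1) * (PowerSeries.C (p.coeff j) * Bpow d j)
          = PowerSeries.C (p.coeff j) * X ^ j := by
      intro j hj
      rw [mul_left_comm, L2 d j (by simpa [Nat.lt_succ_iff] using hj)]
    rw [Finset.sum_congr rfl hterm]
    ext m
    rw [Polynomial.coeff_coe]
    simp only [map_sum, coeff_C_mul, coeff_X_pow]
    rcases Nat.lt_or_ge m (d+1) with hm | hm
    · rw [Finset.sum_eq_single m]
      · simp
      · intro b _ hb; simp [Ne.symm hb]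
      · intro habs; exact absurd (Finset.mem_range.2 hm) habs
    · rw [Finset.sum_eq_zero, Wpoly_coeff_eq_zero d c (by omega)]
      intro b hb
      have hne : m ≠ b := by have := Finset.mem_range.1 hb; omega
      simp [hne]
  -- Step 2: (1-X)^{d+1} * Psi f = ↑p
  have hF : Psi f = ∑ i ∈ Finset.range (d+1), PowerSeries.C (c i) * Spow i := by
    ext m
    simp [Psi, hf, Spow, coeff_mk, map_sum, coeff_C_mul, Polynomial.eval_finset_sum]
  have key2 : (1 - X) ^ (d+1) * Psi f = (p : PowerSeries ℝ) := by
    rw [hF, Finset.mul_sum]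
    have hterm : ∀ i ∈ Finset.range (d+1),
        (1 - X) ^ (d+1) * (PowerSeries.C (c i) * Spow i)
          = PowerSeries.C (c i) * ((1 - X) ^ (d - i) * (eulerian i : PowerSeries ℝ)) := by
      intro i hi
      have hi' : i ≤ d := by simpa [Nat.lt_succ_iff] using hi
      rw [← L1 i, show d + 1 = (d - i) + (i + 1) by omega, pow_add]
      ring
    rw [Finset.sum_congr rfl hterm, hp, Wpoly]
    rw [← Polynomial.coeToPowerSeries.ringHom_apply, map_sum]
    refine Finset.sum_congr rfl fun i hi => ?_
    simp only [map_mul, map_pow, map_sub, map_one,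
      Polynomial.coeToPowerSeries.ringHom_apply, Polynomial.coe_C, Polynomial.coe_X]
    ring
  -- conclude
  have hcancel : Psi (Epoly d fun i => p.coeff i) = Psi f :=
    mul_left_cancel₀ (onenegX_pow_ne_zero (d+1)) (key1.trans key2.symm)
  have hEf : Epoly d (fun i => p.coeff i) = f := Psi_injective hcancel
  intro j hj
  rw [hEf, hf, Polynomial.finset_sum_coeff]
  rw [Finset.sum_eq_single j]
  · simp
  · intro b _ hb
    simp [Polynomial.coeff_C_mul, Polynomial.coeff_X_pow, Ne.symm hb]
  · intro habs; exact absurd (Finset.mem_range.2 (by omega)) habs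
end

section
/- If a polynomial with positive real coefficients has only real roots, then its coefficient sequence is log-concave. -/
open Polynomial

/-- Log-concavity invariant with positivity. -/
def LCpos (p : ℝ[X]) : Prop :=
  (∀ i ≤ p.natDegree, 0 < p.coeff i) ∧ (∀ i, p.coeff i * p.coeff (i + 2) ≤ p.coeff (i + 1) ^ 2)

lemma LCpos.nonneg {p : ℝ[X]} (h : LCpos p) (i : ℕ) : 0 ≤ p.coeff i := by
  by_cases hi : i ≤ p.natDegree
  · exact (h.1 i hi).le
  · rw [p.coeff_eq_zero_of_natDegree_lt (by omega)]

lemma LCpos.cross {p : ℝ[X]} (h : LCpos p) (n : ℕ) :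
    p.coeff n * p.coeff (n + 3) ≤ p.coeff (n + 1) * p.coeff (n + 2) := by
  by_cases hd : n + 3 ≤ p.natDegree
  · have h1 := h.2 n
    have h2 := h.2 (n + 1)
    have p1 := h.1 (n + 1) (by omega)
    have p2 := h.1 (n + 2) (by omega)
    have p0 := h.1 n (by omega)
    have p3 := h.1 (n + 3) (by omega)
    have : n + 1 + 1 = n + 2 := by omega
    rw [this] at h1
    have : n + 1 + 2 = n + 3 := by omega
    rw [this] at h2
    have : n + 2 + 1 = n + 3 := by omega
    nlinarith [mul_pos p1 p2]
  · rw [p.coeff_eq_zero_of_natDegree_lt (show p.natDegree < n + 3 by omega)]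
    simpa using mul_nonneg (h.nonneg (n + 1)) (h.nonneg (n + 2))

lemma LCpos_C {c : ℝ} (hc : 0 < c) : LCpos (C c) := by
  constructor
  · intro i hi
    rw [natDegree_C] at hi
    interval_cases i
    simpa using hc
  · intro i
    have h1 : (C c).coeff (i + 2) = 0 := by simp
    rw [h1, mul_zero]
    positivity

lemma coeff_X_add_C_mul (r : ℝ) (p : ℝ[X]) (n : ℕ) :
    ((X + C r) * p).coeff (n + 1) = p.coeff n + r * p.coeff (n + 1) := by
  rw [add_mul, coeff_add, coeff_X_mul, coeff_C_mul]

lemma coeff_X_add_C_mul_zero (r : ℝ) (p : ℝ[X]) :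
    ((X + C r) * p).coeff 0 = r * p.coeff 0 := by
  rw [add_mul, coeff_add, mul_coeff_zero, coeff_X_zero, zero_mul, zero_add, coeff_C_mul]

lemma LCpos.step {p : ℝ[X]} (h : LCpos p) {r : ℝ} (hr : 0 < r) : LCpos ((X + C r) * p) := by
  have hp0 : p ≠ 0 := fun hp => by simpa [hp] using h.1 0 (by simp [hp])
  have hX : (X + C r) ≠ 0 := X_add_C_ne_zero r
  have hdeg : ((X + C r) * p).natDegree = 1 + p.natDegree := by
    rw [natDegree_mul hX hp0, natDegree_X_add_C]
  constructor
  · intro i hi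
    rw [hdeg] at hi
    cases i with
    | zero => rw [coeff_X_add_C_mul_zero]; exact mul_pos hr (h.1 0 (by omega))
    | succ n =>
      rw [coeff_X_add_C_mul]
      have hn : n ≤ p.natDegree := by omega
      have := h.1 n hn
      have := h.nonneg (n + 1)
      nlinarith
  · intro i
    cases i with
    | zero =>
      rw [coeff_X_add_C_mul_zero, coeff_X_add_C_mul, coeff_X_add_C_mul]
      have h1 := h.2 0
      have n0 := h.nonneg 0
      have n1 := h.nonneg 1
      have n2 := h.nonneg 2
      norm_num at h1 ⊢
      nlinarith [mul_le_mul_of_nonneg_left h1 (mul_nonneg hr.le hr.le),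
        mul_nonneg (mul_nonneg hr.le n0) n1, sq_nonneg (p.coeff 0)]
    | succ n =>
      rw [coeff_X_add_C_mul, coeff_X_add_C_mul, coeff_X_add_C_mul]
      have e1 : n + 1 + 1 = n + 2 := rfl
      have e2 : n + 1 + 2 = n + 3 := rfl
      have e3 : n + 2 + 1 = n + 3 := rfl
      rw [e1, e2, e3]
      have h1 := h.2 n
      have h2 := h.2 (n + 1)
      rw [show n + 1 + 1 = n + 2 from rfl, show n + 1 + 2 = n + 3 from rfl] at h2
      have hc := h.cross n
      have n0 := h.nonneg n
      have n1 := h.nonneg (n + 1)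
      have n2 := h.nonneg (n + 2)
      have n3 := h.nonneg (n + 3)
      nlinarith [mul_le_mul_of_nonneg_left hc hr.le,
        mul_le_mul_of_nonneg_left h2 (mul_nonneg hr.le hr.le)]

lemma LCpos_prod (Q : Multiset ℝ) (hQ : ∀ r ∈ Q, 0 < r) {c : ℝ} (hc : 0 < c) :
    LCpos (C c * (Q.map fun r => X + C r).prod) := by
  induction Q using Multiset.induction with
  | empty => simpa using LCpos_C hc
  | cons a s ih =>
    have ha : 0 < a := hQ a (Multiset.mem_cons_self a s)
    have hs : ∀ r ∈ s, 0 < r := fun r hr => hQ r (Multiset.mem_cons_of_mem hr)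
    have : C c * ((a ::ₘ s).map fun r => X + C r).prod
        = (X + C a) * (C c * (s.map fun r => X + C r).prod) := by
      rw [Multiset.map_cons, Multiset.prod_cons]; ring
    rw [this]
    exact (ih hs).step ha

/-- If a polynomial with positive real coefficients has only real roots, then its coefficient
sequence is log-concave: `a_{i-1} a_{i+1} ≤ a_i^2` for all `1 ≤ i ≤ s - 1`, where `s` is the
degree. -/
theorem realRooted_implies_logConcave (p : Polynomial ℝ)
    (hpos : ∀ i ≤ p.natDegree, 0 < p.coeff i)
    (hrr : ∀ z : ℂ, (p.map (algebraMap ℝ ℂ)).IsRoot z → z.im = 0) :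
    ∀ i, 1 ≤ i → i + 1 ≤ p.natDegree →
      p.coeff (i - 1) * p.coeff (i + 1) ≤ (p.coeff i) ^ 2 := by
  have hp0 : p ≠ 0 := fun hp => by simpa [hp] using hpos 0 (by simp [hp])
  have hlc : 0 < p.leadingCoeff := hpos p.natDegree le_rfl
  -- p splits over ℂ
  obtain ⟨S, hS⟩ := splits_iff_exists_multiset.mp
    (IsAlgClosed.splits (p.map (algebraMap ℝ ℂ)))
  rw [leadingCoeff_map] at hS
  -- every element of S is real
  have hSreal : ∀ z ∈ S, z.im = 0 := by
    intro z hz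
    apply hrr
    rw [IsRoot, hS, eval_mul, eval_multiset_prod]
    rw [Multiset.prod_eq_zero (Multiset.mem_map.mpr
      ⟨X - C z, Multiset.mem_map.mpr ⟨z, hz, rfl⟩, by simp⟩), mul_zero]
  -- p factors over ℝ with real roots S.map re
  have hfac : p = C p.leadingCoeff * ((S.map Complex.re).map fun a => X - C a).prod := by
    apply map_injective (algebraMap ℝ ℂ) (algebraMap ℝ ℂ).injective
    rw [Polynomial.map_mul, map_C, Polynomial.map_multiset_prod, hS, Multiset.map_map, Multiset.map_map]
    congr 1
    refine congrArg (Multiset.prod (M := ℂ[X])) (Multiset.map_congr rfl fun z hz => ?_)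
    have him := hSreal z hz
    have hz2 : (z.re : ℂ) = z := Complex.ext (by simp) (by simp [him])
    simp only [Function.comp_apply, Polynomial.map_sub, map_X, map_C]
    rw [show (algebraMap ℝ ℂ) z.re = z from hz2]
  -- every real root is negative
  have hneg : ∀ t ∈ S.map Complex.re, t < 0 := by
    intro t ht
    have hroot : eval t p = 0 := by
      rw [hfac, eval_mul, eval_multiset_prod]
      rw [Multiset.prod_eq_zero (Multiset.mem_map.mpr
        ⟨X - C t, Multiset.mem_map.mpr ⟨t, ht, rfl⟩, by simp⟩), mul_zero]
    by_contra hle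
    push_neg at hle
    have : 0 < eval t p := by
      rw [eval_eq_sum_range]
      refine Finset.sum_pos' (fun i _ => ?_) ⟨0, Finset.mem_range.mpr (Nat.succ_pos _), ?_⟩
      · by_cases hi : i ≤ p.natDegree
        · exact mul_nonneg (hpos i hi).le (pow_nonneg hle i)
        · rw [p.coeff_eq_zero_of_natDegree_lt (show p.natDegree < i by omega), zero_mul]
      · simpa using hpos 0 (Nat.zero_le _)
    linarith
  -- rewrite as product of (X + C r) with r > 0
  have hfac2 : p = C p.leadingCoeff
      * (((S.map Complex.re).map fun t => -t).map fun r => X + C r).prod := by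
    have hmaps : (((S.map Complex.re).map fun t => -t).map fun r => X + C r)
        = ((S.map Complex.re).map fun a => X - C a) := by
      rw [Multiset.map_map]
      exact Multiset.map_congr rfl fun t _ => by simp [sub_eq_add_neg]
    rw [hmaps]
    exact hfac
  have hLC : LCpos p := by
    rw [hfac2]
    refine LCpos_prod _ (fun r hr => ?_) hlc
    obtain ⟨t, ht, rfl⟩ := Multiset.mem_map.mp hr
    simpa using hneg t ht
  intro i hi1 _
  have := hLC.2 (i - 1)
  rw [show i - 1 + 2 = i + 1 by omega, show i - 1 + 1 = i by omega] at this
  exact this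
end

section
/- Let d = 2k−1 with k ≥ 2, and let q, r be nonnegative integers with r > 0. The d+2 points v_0 = 0, v_1 = e_1, ..., v_{d-1} = e_{d-1}, v_d = u_{q,k} = (1,...,1,q,...,q,q+1) (with k−1 ones, k−1 copies of q), and v_{d+1} = (0,...,0,−r,...,−r) (with k−1 zeros and k copies of −r) in ℝ^d satisfy the affine dependence Σ λ_i v_i = 0 with Σ λ_i = 0, where (λ_0,...,λ_{d+1}) = (−q−r−1, −r,...,−r, r,...,r, q+1) (with k−1 copies of −r and k copies of r), and all λ_i are nonzero. -/
noncomputable def lamFun (k q r d m : ℕ) : ℝ :=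
  if m = 0 then -(q : ℝ) - r - 1
  else if m ≤ k - 1 then -(r : ℝ)
  else if m ≤ d then (r : ℝ)
  else (q : ℝ) + 1

noncomputable def vFun (k q r t d m : ℕ) : ℝ :=
  if m = 0 then 0
  else if m ≤ d - 1 then (if t + 1 = m then 1 else 0)
  else if m = d then
    (if t < k - 1 then 1 else if t < d - 1 then (q : ℝ) else (q : ℝ) + 1)
  else (if t < k - 1 then 0 else -(r : ℝ))

lemma scalar_sum (k q r : ℕ) (hk : 2 ≤ k) (hr : 1 ≤ r) :
    ∑ i ∈ Finset.range (2*k+1), lamFun k q r (2*k-1) i = 0 := by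
  rw [Finset.range_eq_Ico,
    ← Finset.sum_Ico_consecutive _ (show (0:ℕ) ≤ 1 by omega) (show (1:ℕ) ≤ 2*k+1 by omega),
    ← Finset.sum_Ico_consecutive _ (show (1:ℕ) ≤ k by omega) (show k ≤ 2*k+1 by omega),
    ← Finset.sum_Ico_consecutive _ (show k ≤ 2*k by omega) (show 2*k ≤ 2*k+1 by omega)]
  have A : ∑ i ∈ Finset.Ico 0 1, lamFun k q r (2*k-1) i = -(q:ℝ) - r - 1 := by
    rw [← Finset.range_eq_Ico, Finset.sum_range_one]
    simp [lamFun]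
  have B : ∑ i ∈ Finset.Ico 1 k, lamFun k q r (2*k-1) i = (k-1) • (-(r:ℝ)) := by
    rw [Finset.sum_congr rfl (fun i hi => ?_), Finset.sum_const, Nat.card_Ico]
    simp only [Finset.mem_Ico] at hi
    simp only [lamFun]
    rw [if_neg (by omega), if_pos (by omega)]
  have C : ∑ i ∈ Finset.Ico k (2*k), lamFun k q r (2*k-1) i = (2*k-k) • (r:ℝ) := by
    rw [Finset.sum_congr rfl (fun i hi => ?_), Finset.sum_const, Nat.card_Ico]
    simp only [Finset.mem_Ico] at hi
    simp only [lamFun]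
    rw [if_neg (by omega), if_neg (by omega), if_pos (by omega)]
  have D : ∑ i ∈ Finset.Ico (2*k) (2*k+1), lamFun k q r (2*k-1) i = (2*k+1-2*k) • ((q:ℝ)+1) := by
    rw [Finset.sum_congr rfl (fun i hi => ?_), Finset.sum_const, Nat.card_Ico]
    simp only [Finset.mem_Ico] at hi
    simp only [lamFun]
    rw [if_neg (by omega), if_neg (by omega), if_neg (by omega)]
  rw [A, B, C, D, show 2*k - k = k by omega, show 2*k+1-2*k = 1 by omega]
  have hc : ((k-1 : ℕ) : ℝ) = (k:ℝ) - 1 := by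
    have := Nat.cast_sub (show 1 ≤ k by omega) (R := ℝ)
    simpa using this
  simp only [nsmul_eq_mul, hc, one_mul]
  ring

lemma vec_sum (k q r t : ℕ) (hk : 2 ≤ k) (ht : t < 2*k-1) :
    ∑ i ∈ Finset.range (2*k+1), lamFun k q r (2*k-1) i * vFun k q r t (2*k-1) i = 0 := by
  rw [show 2*k+1 = (2*k-1)+1+1 by omega, Finset.sum_range_succ, Finset.sum_range_succ]
  show (∑ i ∈ Finset.range (2*k-1), lamFun k q r (2*k-1) i * vFun k q r t (2*k-1) i)
      + lamFun k q r (2*k-1) (2*k-1) * vFun k q r t (2*k-1) (2*k-1)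
      + lamFun k q r (2*k-1) (2*k-1+1) * vFun k q r t (2*k-1) (2*k-1+1) = 0
  have hlamd : lamFun k q r (2*k-1) (2*k-1) = (r:ℝ) := by
    simp only [lamFun]
    rw [if_neg (by omega), if_neg (by omega), if_pos (by omega)]
  have hlamd1 : lamFun k q r (2*k-1) (2*k-1+1) = (q:ℝ) + 1 := by
    simp only [lamFun]
    rw [if_neg (by omega), if_neg (by omega), if_neg (by omega)]
  by_cases h1 : t = 2*k-2
  · have hz : ∑ i ∈ Finset.range (2*k-1), lamFun k q r (2*k-1) i * vFun k q r t (2*k-1) i = 0 := by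
      refine Finset.sum_eq_zero (fun i hi => ?_)
      simp only [Finset.mem_range] at hi
      by_cases hi0 : i = 0
      · subst hi0; simp [vFun]
      · have : vFun k q r t (2*k-1) i = 0 := by
          simp only [vFun]
          rw [if_neg hi0, if_pos (by omega), if_neg (by omega)]
        rw [this, mul_zero]
    have hvd : vFun k q r t (2*k-1) (2*k-1) = (q:ℝ) + 1 := by
      simp only [vFun]
      rw [if_neg (by omega), if_neg (by omega), if_pos trivial, if_neg (by omega), if_neg (by omega)]
    have hvd1 : vFun k q r t (2*k-1) (2*k-1+1) = -(r:ℝ) := by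
      simp only [vFun]
      rw [if_neg (by omega), if_neg (by omega), if_neg (by omega), if_neg (by omega)]
    rw [hz, hvd, hvd1, hlamd, hlamd1]; ring
  · have ht2 : t < 2*k-2 := by omega
    have hhead : ∑ i ∈ Finset.range (2*k-1), lamFun k q r (2*k-1) i * vFun k q r t (2*k-1) i
        = lamFun k q r (2*k-1) (t+1) := by
      rw [Finset.sum_eq_single_of_mem (t+1) (Finset.mem_range.mpr (by omega)) (fun b hb hbne => ?_)]
      · have hv : vFun k q r t (2*k-1) (t+1) = 1 := by
          simp only [vFun]
          rw [if_neg (by omega), if_pos (by omega), if_pos trivial]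
        rw [hv, mul_one]
      · simp only [Finset.mem_range] at hb
        by_cases hb0 : b = 0
        · subst hb0; simp [vFun]
        · have : vFun k q r t (2*k-1) b = 0 := by
            simp only [vFun]
            rw [if_neg hb0, if_pos (by omega), if_neg (by omega)]
          rw [this, mul_zero]
    by_cases h2 : t < k - 1
    · have hlamt : lamFun k q r (2*k-1) (t+1) = -(r:ℝ) := by
        simp only [lamFun]
        rw [if_neg (by omega), if_pos (by omega)]
      have hvd : vFun k q r t (2*k-1) (2*k-1) = 1 := by
        simp only [vFun]
        rw [if_neg (by omega), if_neg (by omega), if_pos trivial, if_pos h2]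
      have hvd1 : vFun k q r t (2*k-1) (2*k-1+1) = 0 := by
        simp only [vFun]
        rw [if_neg (by omega), if_neg (by omega), if_neg (by omega), if_pos h2]
      rw [hhead, hlamt, hvd, hvd1, hlamd, hlamd1]; ring
    · have hlamt : lamFun k q r (2*k-1) (t+1) = (r:ℝ) := by
        simp only [lamFun]
        rw [if_neg (by omega), if_neg (by omega), if_pos (by omega)]
      have hvd : vFun k q r t (2*k-1) (2*k-1) = (q:ℝ) := by
        simp only [vFun]
        rw [if_neg (by omega), if_neg (by omega), if_pos trivial, if_neg h2, if_pos (by omega)]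
      have hvd1 : vFun k q r t (2*k-1) (2*k-1+1) = -(r:ℝ) := by
        simp only [vFun]
        rw [if_neg (by omega), if_neg (by omega), if_neg (by omega), if_neg h2]
      rw [hhead, hlamt, hvd, hvd1, hlamd, hlamd1]; ring

/-- The `d+2` points `0, e_1, …, e_{d-1}, u_{q,k}, v_{r,k}` in `ℝ^d` (`d = 2k-1`), with
`u_{q,k} = (1,…,1,q,…,q,q+1)` (`k-1` ones, `k-1` copies of `q`) and
`v_{r,k} = (0,…,0,-r,…,-r)` (`k-1` zeros, `k` copies of `-r`), satisfy the affine dependence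
`∑ λ_i v_i = 0`, `∑ λ_i = 0`, with
`(λ_0,…,λ_{d+1}) = (-q-r-1, -r,…,-r, r,…,r, q+1)` (`k-1` copies of `-r`, `k` copies of `r`),
all `λ_i` nonzero. -/
theorem circuit_affine_dependence (k q r : ℕ) (hk : 2 ≤ k) (hr : 1 ≤ r) :
    let d := 2 * k - 1
    let v : Fin (d + 2) → (Fin d → ℝ) := fun i t =>
      if (i : ℕ) = 0 then 0
      else if (i : ℕ) ≤ d - 1 then (if (t : ℕ) + 1 = (i : ℕ) then 1 else 0)
      else if (i : ℕ) = d then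
        (if (t : ℕ) < k - 1 then 1 else if (t : ℕ) < d - 1 then (q : ℝ) else (q : ℝ) + 1)
      else (if (t : ℕ) < k - 1 then 0 else -(r : ℝ))
    let lam : Fin (d + 2) → ℝ := fun i =>
      if (i : ℕ) = 0 then -(q : ℝ) - r - 1
      else if (i : ℕ) ≤ k - 1 then -(r : ℝ)
      else if (i : ℕ) ≤ d then (r : ℝ)
      else (q : ℝ) + 1
    (∑ i, lam i • v i = 0) ∧ (∑ i, lam i = 0) ∧ (∀ i, lam i ≠ 0) := by
  intro d v lam
  have hd : d = 2*k - 1 := rfl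
  have hrR : (1:ℝ) ≤ r := by exact_mod_cast hr
  have hq0 : (0:ℝ) ≤ q := Nat.cast_nonneg q
  refine ⟨?_, ?_, ?_⟩
  · funext t
    rw [Finset.sum_apply]
    show ∑ i : Fin (d+2), lamFun k q r d ↑i * vFun k q r (↑t) d ↑i = 0
    refine (Fin.sum_univ_eq_sum_range (fun m => lamFun k q r d m * vFun k q r (↑t) d m) (d+2)).trans ?_
    show ∑ i ∈ Finset.range ((2*k-1)+2), lamFun k q r (2*k-1) i * vFun k q r (↑t) (2*k-1) i = 0
    rw [show (2*k-1)+2 = 2*k+1 by omega]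
    exact vec_sum k q r ↑t hk (by have := t.isLt; omega)
  · refine (Fin.sum_univ_eq_sum_range (lamFun k q r d) (d+2)).trans ?_
    show ∑ i ∈ Finset.range ((2*k-1)+2), lamFun k q r (2*k-1) i = 0
    rw [show (2*k-1)+2 = 2*k+1 by omega]
    exact scalar_sum k q r hk hr
  · intro i
    show lamFun k q r d ↑i ≠ 0
    simp only [lamFun, ne_eq]
    split_ifs <;> intro h <;> linarith
end

section
/- Let k ≥ 2, r ≥ 1 and set d = 2k−1. The (d×d) integer matrix A with block structure: top-left (k−1)×(k−1) identity, top-middle (k−1)×(k−1) block all entries −r, top-right column all −r; middle-left block zero, middle (k−1)×(k−1) block equal to (−r)·J + I where J is the all-ones matrix (i.e., diagonal entries −r+1, off-diagonal −r), middle-right column all −r; bottom row (0,...,0, (k−1)r, ..., (k−1)r, (k−1)r+1) with k−1 zeros and k−1 entries (k−1)r — has determinant ±1 (is unimodular). -/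
/-!
The matrix is a rank-one perturbation `1 + u vᵀ` of the identity, with `v` the indicator of the
last `k` coordinates and `u = (-r, …, -r, (k-1) r)`. By the matrix determinant lemma its
determinant is `1 + v ⬝ u = 1 + (k - 1)(-r) + (k - 1) r = 1`.
-/

open Matrix

theorem Matrix.det_one_add_vecMulVec {n R : Type*} [Fintype n] [DecidableEq n] [CommRing R]
    (u v : n → R) : det (1 + vecMulVec u v) = 1 + v ⬝ᵥ u := by
  rw [vecMulVec_eq Unit, det_one_add_replicateCol_mul_replicateRow]

def reeveColumn (k r : ℕ) (i : Fin (2 * k - 1)) : ℤ :=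
  if (i : ℕ) < 2 * k - 2 then -(r : ℤ) else ((k : ℤ) - 1) * r

def reeveRow (k : ℕ) (j : Fin (2 * k - 1)) : ℤ :=
  if (j : ℕ) < k - 1 then 0 else 1

theorem reeveRow_dotProduct_reeveColumn (k r : ℕ) : reeveRow k ⬝ᵥ reeveColumn k r = 0 := by
  rcases k with _ | m
  · simp [dotProduct]
  have hsum := Fin.sum_univ_eq_sum_range (fun j => (if j < m then (0 : ℤ) else 1) *
    (if j < 2 * m then -(r : ℤ) else m * r)) (2 * (m + 1) - 1)
  simp only [dotProduct, reeveRow, reeveColumn]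
  push_cast
  simp only [add_sub_cancel_right, show 2 * (m + 1) - 2 = 2 * m by omega]
  rw [hsum, show 2 * (m + 1) - 1 = m + m + 1 by omega, Finset.sum_range_succ,
    Finset.sum_range_add]
  have hlow : ∀ j ∈ Finset.range m, (if j < m then (0 : ℤ) else 1) *
      (if j < 2 * m then -(r : ℤ) else m * r) = 0 := fun j hj => by
    simp [Finset.mem_range.mp hj]
  have hhigh : ∀ j ∈ Finset.range m, (if m + j < m then (0 : ℤ) else 1) *
      (if m + j < 2 * m then -(r : ℤ) else m * r) = -r := fun j hj => by
    simp [show m + j < 2 * m by have := Finset.mem_range.mp hj; omega]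
  rw [Finset.sum_eq_zero hlow, Finset.sum_congr rfl hhigh]
  simp only [Finset.sum_const, Finset.card_range, nsmul_eq_mul, zero_add, one_mul,
    if_neg (show ¬ m + m < m by omega), if_neg (show ¬ m + m < 2 * m by omega)]
  ring

theorem reeve_embedding_matrix_unimodular_general (k r : ℕ) :
    let d := 2 * k - 1
    let A : Matrix (Fin d) (Fin d) ℤ := Matrix.of fun i j =>
      if (i : ℕ) < k - 1 then
        (if (j : ℕ) < k - 1 then (if i = j then 1 else 0) else -(r : ℤ))
      else if (i : ℕ) < d - 1 then
        (if (j : ℕ) < k - 1 then 0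
         else if (j : ℕ) < d - 1 then (if i = j then -(r : ℤ) + 1 else -(r : ℤ))
         else -(r : ℤ))
      else
        (if (j : ℕ) < k - 1 then 0
         else if (j : ℕ) < d - 1 then ((k : ℤ) - 1) * r
         else ((k : ℤ) - 1) * r + 1)
    A.det = 1 ∨ A.det = -1 := by
  intro d A
  have hA : A = 1 + vecMulVec (reeveColumn k r) (reeveRow k) := by
    ext i j
    simp only [A, d, of_apply, Matrix.add_apply, one_apply, vecMulVec_apply, reeveColumn,
      reeveRow, Fin.ext_iff]
    split_ifs <;> simp only [mul_zero, mul_one, add_zero] <;> omega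
  left
  rw [hA, det_one_add_vecMulVec, reeveRow_dotProduct_reeveColumn, add_zero]

/-- The `d × d` integer matrix (`d = 2k - 1`) with block structure: top-left `(k-1)×(k-1)`
identity, top-middle block all `-r`, top-right column `-r`; middle-left block zero, middle
`(k-1)×(k-1)` block with diagonal `-r+1` and off-diagonal `-r`, middle-right column `-r`;
bottom row `(0,…,0,(k-1)r,…,(k-1)r,(k-1)r+1)` — is unimodular (determinant `±1`). -/
theorem reeve_embedding_matrix_unimodular (k r : ℕ) (hk : 2 ≤ k) (hr : 1 ≤ r) :
    let d := 2 * k - 1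
    let A : Matrix (Fin d) (Fin d) ℤ := Matrix.of fun i j =>
      if (i : ℕ) < k - 1 then
        (if (j : ℕ) < k - 1 then (if i = j then 1 else 0) else -(r : ℤ))
      else if (i : ℕ) < d - 1 then
        (if (j : ℕ) < k - 1 then 0
         else if (j : ℕ) < d - 1 then (if i = j then -(r : ℤ) + 1 else -(r : ℤ))
         else -(r : ℤ))
      else
        (if (j : ℕ) < k - 1 then 0
         else if (j : ℕ) < d - 1 then ((k : ℤ) - 1) * r
         else ((k : ℤ) - 1) * r + 1)
    A.det = 1 ∨ A.det = -1 :=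
  reeve_embedding_matrix_unimodular_general k r
end
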